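/- arXiv:2302.01814 — 3 statements merged into one kernel-verified Lean document; each statement's English description precedes it below -/
import Mathlib

section
/- If a_j⁰ − b_j⁰ < 0 for all j = 1,…,n, then there exists d̂₁ ∈ (0,d_*] such that for every d ∈ (0,d̂₁], every τ ≥ 0 and every μ ∈ ℂ for which Δ(d,μ,τ) is singular, one has Re μ < 0. (Thus for small dispersal rates the positive equilibrium u^d is locally asymptotically stable for all delays and no Hopf bifurcation occurs.) -/
open Matrix Filter Set

/-- Spectral bound of a real square matrix: the maximum of the real parts of its
complex eigenvalues. -/
noncomputable def specBound {n : ℕ} (M : Matrix (Fin n) (Fin n) ℝ) : ℝ :=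
  sSup (Complex.re '' spectrum ℂ (M.map (fun x : ℝ => (x : ℂ))))

/-- Partial derivative of `f : ℝ × ℝ → ℝ` with respect to the first variable. -/
noncomputable def pd1 (f : ℝ × ℝ → ℝ) (x y : ℝ) : ℝ := fderiv ℝ f (x, y) (1, 0)

/-- Partial derivative of `f : ℝ × ℝ → ℝ` with respect to the second variable. -/
noncomputable def pd2 (f : ℝ × ℝ → ℝ) (x y : ℝ) : ℝ := fderiv ℝ f (x, y) (0, 1)

/-- The characteristic matrix
`Δ(d,μ,τ) = dA + diag(f_j(u_j,u_j) + u_j a_j^d) + e^{-μτ} diag(u_j b_j^d) - μ I`. -/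
noncomputable def charM {n : ℕ} (A : Matrix (Fin n) (Fin n) ℝ) (f : Fin n → ℝ × ℝ → ℝ)
    (u : Fin n → ℝ) (d : ℝ) (μ : ℂ) (τ : ℝ) : Matrix (Fin n) (Fin n) ℂ :=
  (d : ℂ) • A.map (fun x : ℝ => (x : ℂ))
    + Matrix.diagonal (fun j => ((f j (u j, u j) + u j * pd1 (f j) (u j) (u j) : ℝ) : ℂ))
    + Complex.exp (-μ * (τ : ℂ)) •
        Matrix.diagonal (fun j => ((u j * pd2 (f j) (u j) (u j) : ℝ) : ℂ))
    - μ • (1 : Matrix (Fin n) (Fin n) ℂ)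

lemma myHasDeriv (f : ℝ × ℝ → ℝ) (hf : ContDiff ℝ 4 f) (x : ℝ) :
    HasDerivAt (fun y => f (y, y)) (pd1 f x x + pd2 f x x) x := by
  have hd : DifferentiableAt ℝ f (x, x) := (hf.differentiable (by norm_num)).differentiableAt
  have h2 : HasDerivAt (fun y : ℝ => (y, y)) ((1 : ℝ), (1 : ℝ)) x :=
    (hasDerivAt_id x).prodMk (hasDerivAt_id x)
  have h3 : HasDerivAt (fun y => f (y, y)) ((fderiv ℝ f (x, x)) (1, 1)) x :=
    HasFDerivAt.comp_hasDerivAt (f := fun y : ℝ => (y, y)) x hd.hasFDerivAt h2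
  have h4 : (fderiv ℝ f (x, x)) (1, 1) = pd1 f x x + pd2 f x x := by
    rw [pd1, pd2, ← ContinuousLinearMap.map_add]
    norm_num
  exact h4 ▸ h3

lemma contpd (f : ℝ × ℝ → ℝ) (hf : ContDiff ℝ 4 f) (v : ℝ × ℝ) :
    Continuous (fun x : ℝ => (fderiv ℝ f (x, x)) v) := by
  have h1 : Continuous (fderiv ℝ f) := hf.continuous_fderiv (by norm_num)
  exact (h1.comp (continuous_id.prodMk continuous_id)).clm_apply continuous_const

set_option maxHeartbeats 1600000 in
theorem stmt12 {n : ℕ} (hn : 2 ≤ n) (A : Matrix (Fin n) (Fin n) ℝ)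
    (f : Fin n → ℝ × ℝ → ℝ) (m : Fin n → ℝ)
    -- (H0)
    (hoff : ∀ j k, j ≠ k → 0 ≤ A j k)
    (hirr : ∀ S : Finset (Fin n), S.Nonempty → S ≠ Finset.univ →
      ∃ j ∉ S, ∃ k ∈ S, 0 < A j k)
    (hcol : ∀ j, ∑ k ∈ Finset.univ.erase j, A k j ≤ -A j j)
    (hstr : ∃ j, ∑ k ∈ Finset.univ.erase j, A k j < -A j j)
    -- (H1)
    (hf : ∀ j, ContDiff ℝ 4 (f j)) (hm : ∀ j, 0 < m j) (hf0 : ∀ j, f j (0, 0) = m j)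
    (hg : ∀ j x, (0:ℝ) ≤ x → deriv (fun y => f j (y, y)) x < 0)
    (u0 : Fin n → ℝ) (hu0 : ∀ j, 0 < u0 j ∧ f j (u0 j, u0 j) = 0)
    -- the critical dispersal rate d_*
    (dstar : ℝ) (hds : 0 < dstar)
    (hsd : specBound (dstar • A + Matrix.diagonal m) = 0)
    -- the unique positive equilibrium u^d for d ∈ (0, d_*)
    (u : ℝ → Fin n → ℝ)
    (hu : ∀ d, 0 < d → d < dstar → (∀ j, 0 < u d j) ∧
      (∀ j, d * ∑ k, A j k * u d k + u d j * f j (u d j, u d j) = 0) ∧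
      ∀ v : Fin n → ℝ, (∀ j, 0 < v j) →
        (∀ j, d * ∑ k, A j k * v k + v j * f j (v j, v j) = 0) → v = u d)
    -- a_j⁰ − b_j⁰ < 0 for all j
    (hab : ∀ j, pd1 (f j) (u0 j) (u0 j) - pd2 (f j) (u0 j) (u0 j) < 0) :
    ∃ dhat, 0 < dhat ∧ dhat ≤ dstar ∧
      ∀ d, 0 < d → d ≤ dhat → d < dstar → ∀ τ : ℝ, 0 ≤ τ →
        ∀ μ : ℂ, (charM A f (u d) d μ τ).det = 0 → μ.re < 0 := by
  have hne : Nonempty (Fin n) := ⟨⟨0, by omega⟩⟩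
  have hFne : (Finset.univ : Finset (Fin n)).Nonempty := Finset.univ_nonempty
  obtain ⟨j0⟩ := hne
  -- basic analytic facts
  have hgcont : ∀ j, Continuous (fun x => f j (x, x)) :=
    fun j => (hf j).continuous.comp (continuous_id.prodMk continuous_id)
  have hacont : ∀ j, Continuous (fun x => pd1 (f j) x x) := fun j => contpd (f j) (hf j) (1, 0)
  have hbcont : ∀ j, Continuous (fun x => pd2 (f j) x x) := fun j => contpd (f j) (hf j) (0, 1)
  have hanti : ∀ j, StrictAntiOn (fun x => f j (x, x)) (Set.Ici 0) := by
    intro j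
    apply strictAntiOn_of_deriv_neg (convex_Ici 0) (hgcont j).continuousOn
    intro x hx
    rw [interior_Ici] at hx
    exact hg j x hx.le
  have hg0 : ∀ j, f j (u0 j, u0 j) = 0 := fun j => (hu0 j).2
  have hu0p : ∀ j, 0 < u0 j := fun j => (hu0 j).1
  -- the key function h and its negativity near u0
  set h : Fin n → ℝ → ℝ := fun j x =>
    f j (x, x) + x * (pd1 (f j) x x + |pd2 (f j) x x|) with hh
  have haby : ∀ j, pd1 (f j) (u0 j) (u0 j) + |pd2 (f j) (u0 j) (u0 j)| < 0 := by
    intro j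
    have h1 := hab j
    have h2 : pd1 (f j) (u0 j) (u0 j) + pd2 (f j) (u0 j) (u0 j) < 0 := by
      have := hg j (u0 j) (hu0p j).le
      rwa [(myHasDeriv (f j) (hf j) (u0 j)).deriv] at this
    rcases le_or_gt 0 (pd2 (f j) (u0 j) (u0 j)) with hb | hb
    · rw [abs_of_nonneg hb]; linarith
    · rw [abs_of_neg hb]; linarith
  have hneg : ∀ j, h j (u0 j) < 0 := by
    intro j
    simp only [hh, hg0 j, zero_add]
    exact mul_neg_of_pos_of_neg (hu0p j) (haby j)
  have hcon : ∀ j, Continuous (h j) := by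
    intro j
    exact (hgcont j).add (continuous_id.mul ((hacont j).add (hbcont j).abs))
  have hεex : ∀ j, ∃ ε, 0 < ε ∧ ε ≤ u0 j / 2 ∧ ∀ x, |x - u0 j| < ε → h j x < 0 := by
    intro j
    have hev : ∀ᶠ x in nhds (u0 j), h j x < 0 :=
      (hcon j).continuousAt.eventually_lt continuousAt_const (hneg j)
    rw [Metric.eventually_nhds_iff] at hev
    obtain ⟨ε, hε0, hε⟩ := hev
    refine ⟨min (ε / 2) (u0 j / 2), lt_min (by linarith) (by linarith [hu0p j]), min_le_right _ _, ?_⟩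
    intro x hx
    apply hε
    rw [Real.dist_eq]
    calc |x - u0 j| < min (ε / 2) (u0 j / 2) := hx
      _ ≤ ε / 2 := min_le_left _ _
      _ < ε := by linarith
  choose ε hε0 hεle hεh using hεex
  -- constants
  set R : ℝ := Finset.univ.sup' hFne (fun j => |∑ k, A j k|) with hR
  have hRj : ∀ j, |∑ k, A j k| ≤ R := fun j => by
    rw [hR]; exact Finset.le_sup' (fun j => |∑ k, A j k|) (Finset.mem_univ j)
  have hR0 : 0 ≤ R := le_trans (abs_nonneg _) (hRj j0)
  set c : ℝ := Finset.univ.inf' hFne (fun j => u0 j / 2) with hcc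
  have hc0 : 0 < c := by
    rw [hcc, Finset.lt_inf'_iff]; exact fun j _ => by linarith [hu0p j]
  have hcj : ∀ j, c ≤ u0 j / 2 := fun j => by
    rw [hcc]; exact Finset.inf'_le (fun j => u0 j / 2) (Finset.mem_univ j)
  set M : ℝ := Finset.univ.sup' hFne (fun j => u0 j + u0 j / 2) with hM
  have hMj : ∀ j, u0 j + u0 j / 2 ≤ M := fun j => by
    rw [hM]; exact Finset.le_sup' (fun j => u0 j + u0 j / 2) (Finset.mem_univ j)
  have hM0 : 0 < M := lt_of_lt_of_le (by linarith [hu0p j0]) (hMj j0)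
  set S : ℝ := Finset.univ.sup' hFne (fun j => ∑ k, |A j k|) with hS
  have hSj : ∀ j, ∑ k, |A j k| ≤ S := fun j => by
    rw [hS]; exact Finset.le_sup' (fun j => ∑ k, |A j k|) (Finset.mem_univ j)
  have hS0 : 0 ≤ S :=
    le_trans (Finset.sum_nonneg fun k _ => abs_nonneg _) (hSj j0)
  set K : ℝ := S * M / c with hK
  have hK0 : 0 ≤ K := by positivity
  -- stage-1 margins
  set D1 : ℝ := Finset.univ.inf' hFne (fun j =>
    min (-(f j (u0 j + u0 j / 2, u0 j + u0 j / 2))) (f j (u0 j / 2, u0 j / 2))) with hD1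
  have hD1a : ∀ j, D1 ≤ -(f j (u0 j + u0 j / 2, u0 j + u0 j / 2)) :=
    fun j => by
    rw [hD1]
    exact le_trans (Finset.inf'_le (fun j => min (-(f j (u0 j + u0 j / 2, u0 j + u0 j / 2))) (f j (u0 j / 2, u0 j / 2))) (Finset.mem_univ j)) (min_le_left _ _)
  have hD1b : ∀ j, D1 ≤ f j (u0 j / 2, u0 j / 2) :=
    fun j => by
    rw [hD1]
    exact le_trans (Finset.inf'_le (fun j => min (-(f j (u0 j + u0 j / 2, u0 j + u0 j / 2))) (f j (u0 j / 2, u0 j / 2))) (Finset.mem_univ j)) (min_le_right _ _)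
  have hD1pos : 0 < D1 := by
    rw [hD1, Finset.lt_inf'_iff]
    intro j _
    refine lt_min ?_ ?_
    · have : f j (u0 j + u0 j / 2, u0 j + u0 j / 2) < f j (u0 j, u0 j) :=
        hanti j (mem_Ici.mpr (hu0p j).le)
          (mem_Ici.mpr (by linarith [hu0p j])) (by linarith [hu0p j])
      rw [hg0 j] at this
      simpa using this
    · have : f j (u0 j, u0 j) < f j (u0 j / 2, u0 j / 2) :=
        hanti j (mem_Ici.mpr (by linarith [hu0p j]))
          (mem_Ici.mpr (hu0p j).le) (by linarith [hu0p j])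
      rw [hg0 j] at this
      simpa using this
  -- stage-2 margins
  set D2 : ℝ := Finset.univ.inf' hFne (fun j =>
    min (-(f j (u0 j + ε j, u0 j + ε j))) (f j (u0 j - ε j, u0 j - ε j))) with hD2
  have hD2a : ∀ j, D2 ≤ -(f j (u0 j + ε j, u0 j + ε j)) :=
    fun j => by
    rw [hD2]
    exact le_trans (Finset.inf'_le (fun j => min (-(f j (u0 j + ε j, u0 j + ε j))) (f j (u0 j - ε j, u0 j - ε j))) (Finset.mem_univ j)) (min_le_left _ _)
  have hD2b : ∀ j, D2 ≤ f j (u0 j - ε j, u0 j - ε j) :=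
    fun j => by
    rw [hD2]
    exact le_trans (Finset.inf'_le (fun j => min (-(f j (u0 j + ε j, u0 j + ε j))) (f j (u0 j - ε j, u0 j - ε j))) (Finset.mem_univ j)) (min_le_right _ _)
  have hD2pos : 0 < D2 := by
    rw [hD2, Finset.lt_inf'_iff]
    intro j _
    refine lt_min ?_ ?_
    · have : f j (u0 j + ε j, u0 j + ε j) < f j (u0 j, u0 j) :=
        hanti j (mem_Ici.mpr (hu0p j).le)
          (mem_Ici.mpr (by linarith [hu0p j, hε0 j])) (by linarith [hε0 j])
      rw [hg0 j] at this
      simpa using this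
    · have : f j (u0 j, u0 j) < f j (u0 j - ε j, u0 j - ε j) :=
        hanti j (mem_Ici.mpr (by linarith [hεle j, hu0p j]))
          (mem_Ici.mpr (hu0p j).le) (by linarith [hε0 j])
      rw [hg0 j] at this
      simpa using this
  -- the dispersal threshold
  refine ⟨min dstar (min (D1 / (R + 1)) (D2 / (K + 1))), by positivity, min_le_left _ _, ?_⟩
  intro d hd0 hdle hdlt τ hτ μ hdet
  obtain ⟨hpos, heq, -⟩ := hu d hd0 hdlt
  have hdR : d * R < D1 := by
    have h1 : d ≤ D1 / (R + 1) := le_trans hdle (le_trans (min_le_right _ _) (min_le_left _ _))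
    have h2 : d * (R + 1) ≤ D1 := by
      rw [le_div_iff₀ (by linarith)] at h1
      linarith
    nlinarith
  have hdK : d * K < D2 := by
    have h1 : d ≤ D2 / (K + 1) := le_trans hdle (le_trans (min_le_right _ _) (min_le_right _ _))
    have h2 : d * (K + 1) ≤ D2 := by
      rw [le_div_iff₀ (by linarith)] at h1
      linarith
    nlinarith
  -- upper bound on u d
  have hub : ∀ l, u d l ≤ M := by
    obtain ⟨j, -, hjmax⟩ := Finset.exists_max_image Finset.univ (u d) hFne
    have key : ∀ l, u d l ≤ u d j := fun l => hjmax l (Finset.mem_univ l)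
    have hsum : ∑ k, A j k * u d k ≤ R * u d j := by
      calc ∑ k, A j k * u d k ≤ ∑ k, A j k * u d j := by
            apply Finset.sum_le_sum
            intro k _
            rcases eq_or_ne k j with rfl | hkj
            · exact le_refl _
            · exact mul_le_mul_of_nonneg_left (key k) (hoff j k (Ne.symm hkj))
        _ = (∑ k, A j k) * u d j := by rw [Finset.sum_mul]
        _ ≤ R * u d j :=
            mul_le_mul_of_nonneg_right (le_trans (le_abs_self _) (hRj j)) (hpos j).le
    have hgge : -(d * R) ≤ f j (u d j, u d j) := by
      have e1 := heq j
      have e2 : d * ∑ k, A j k * u d k ≤ d * (R * u d j) :=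
        mul_le_mul_of_nonneg_left hsum hd0.le
      have e3 : u d j * (-(d * R)) ≤ u d j * f j (u d j, u d j) := by nlinarith
      exact (mul_le_mul_iff_right₀ (hpos j)).mp e3
    have hlt : u d j < u0 j + u0 j / 2 := by
      have hcmp : f j (u0 j + u0 j / 2, u0 j + u0 j / 2) < f j (u d j, u d j) := by
        have : f j (u0 j + u0 j / 2, u0 j + u0 j / 2) ≤ -D1 := by linarith [hD1a j]
        linarith [hdR]
      exact ((hanti j).lt_iff_gt (mem_Ici.mpr (by linarith [hu0p j]))
        (mem_Ici.mpr (hpos j).le)).mp hcmp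
    intro l
    exact le_trans (key l) (le_trans hlt.le (hMj j))
  -- lower bound on u d
  have hlb : ∀ l, c ≤ u d l := by
    obtain ⟨j, -, hjmin⟩ := Finset.exists_min_image Finset.univ (u d) hFne
    have key : ∀ l, u d j ≤ u d l := fun l => hjmin l (Finset.mem_univ l)
    have hsum : (-R) * u d j ≤ ∑ k, A j k * u d k := by
      calc (-R) * u d j ≤ (∑ k, A j k) * u d j :=
            mul_le_mul_of_nonneg_right (by linarith [(abs_le.mp (hRj j)).1]) (hpos j).le
        _ = ∑ k, A j k * u d j := by rw [Finset.sum_mul]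
        _ ≤ ∑ k, A j k * u d k := by
            apply Finset.sum_le_sum
            intro k _
            rcases eq_or_ne k j with rfl | hkj
            · exact le_refl _
            · exact mul_le_mul_of_nonneg_left (key k) (hoff j k (Ne.symm hkj))
    have hgle : f j (u d j, u d j) ≤ d * R := by
      have e1 := heq j
      have e2 : d * ((-R) * u d j) ≤ d * ∑ k, A j k * u d k :=
        mul_le_mul_of_nonneg_left hsum hd0.le
      have e3 : u d j * f j (u d j, u d j) ≤ u d j * (d * R) := by nlinarith
      exact (mul_le_mul_iff_right₀ (hpos j)).mp e3
    have hgt : u0 j / 2 < u d j := by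
      have hcmp : f j (u d j, u d j) < f j (u0 j / 2, u0 j / 2) := by
        have := hD1b j
        linarith [hdR]
      exact ((hanti j).lt_iff_gt (mem_Ici.mpr (hpos j).le)
        (mem_Ici.mpr (by linarith [hu0p j]))).mp hcmp
    intro l
    exact le_trans (hcj j) (le_trans hgt.le (key l))
  -- each component is ε-close to u0, hence h is negative there
  have hclose : ∀ j, h j (u d j) < 0 := by
    intro j
    have hgb : |f j (u d j, u d j)| * c ≤ d * (S * M) := by
      have e1 := heq j
      have habsum : |∑ k, A j k * u d k| ≤ S * M := by
        calc |∑ k, A j k * u d k| ≤ ∑ k, |A j k * u d k| := Finset.abs_sum_le_sum_abs _ _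
          _ ≤ ∑ k, |A j k| * M := by
              apply Finset.sum_le_sum
              intro k _
              rw [abs_mul, abs_of_pos (hpos k)]
              exact mul_le_mul_of_nonneg_left (hub k) (abs_nonneg _)
          _ = (∑ k, |A j k|) * M := by rw [Finset.sum_mul]
          _ ≤ S * M := mul_le_mul_of_nonneg_right (hSj j) hM0.le
      have e2 : u d j * |f j (u d j, u d j)| = d * |∑ k, A j k * u d k| := by
        have e0 : u d j * f j (u d j, u d j) = -(d * ∑ k, A j k * u d k) := by linarith
        calc u d j * |f j (u d j, u d j)| = |u d j * f j (u d j, u d j)| := by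
              rw [abs_mul, abs_of_pos (hpos j)]
          _ = |d * ∑ k, A j k * u d k| := by rw [e0, abs_neg]
          _ = d * |∑ k, A j k * u d k| := by rw [abs_mul, abs_of_pos hd0]
      have e3 : c * |f j (u d j, u d j)| ≤ u d j * |f j (u d j, u d j)| :=
        mul_le_mul_of_nonneg_right (hlb j) (abs_nonneg _)
      have e4 : d * |∑ k, A j k * u d k| ≤ d * (S * M) :=
        mul_le_mul_of_nonneg_left habsum hd0.le
      nlinarith
    have hgsmall : |f j (u d j, u d j)| < D2 := by
      have : |f j (u d j, u d j)| ≤ d * K := by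
        rw [hK, ← mul_div_assoc, le_div_iff₀ hc0]
        linarith [hgb]
      linarith
    have h1 : u d j < u0 j + ε j := by
      have hcmp : f j (u0 j + ε j, u0 j + ε j) < f j (u d j, u d j) := by
        have := hD2a j
        have := (abs_lt.mp hgsmall).1
        linarith
      exact ((hanti j).lt_iff_gt (mem_Ici.mpr (by linarith [hu0p j, hε0 j]))
        (mem_Ici.mpr (hpos j).le)).mp hcmp
    have h2 : u0 j - ε j < u d j := by
      have hcmp : f j (u d j, u d j) < f j (u0 j - ε j, u0 j - ε j) := by
        have := hD2b j
        have := (abs_lt.mp hgsmall).2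
        linarith
      exact ((hanti j).lt_iff_gt (mem_Ici.mpr (hpos j).le)
        (mem_Ici.mpr (by linarith [hεle j, hu0p j]))).mp hcmp
    exact hεh j _ (abs_sub_lt_iff.mpr ⟨by linarith, by linarith⟩)
  -- Gershgorin argument
  by_contra hre
  push_neg at hre
  refine det_ne_zero_of_sum_col_lt_diag (A := charM A f (u d) d μ τ) ?_ hdet
  intro k
  have Δoff : ∀ i : Fin n, i ≠ k → charM A f (u d) d μ τ i k = ((d * A i k : ℝ) : ℂ) := by
    intro i hik
    simp [charM, Matrix.add_apply, Matrix.sub_apply, Matrix.smul_apply, Matrix.map_apply,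
      Matrix.diagonal_apply_ne _ hik, Matrix.one_apply_ne hik]
  have Δdiag : charM A f (u d) d μ τ k k =
      ((d * A k k : ℝ) : ℂ)
      + ((f k (u d k, u d k) + u d k * pd1 (f k) (u d k) (u d k) : ℝ) : ℂ)
      + Complex.exp (-μ * (τ : ℂ)) * ((u d k * pd2 (f k) (u d k) (u d k) : ℝ) : ℂ) - μ := by
    simp only [charM, Matrix.add_apply, Matrix.sub_apply, Matrix.smul_apply, Matrix.map_apply,
      Matrix.diagonal_apply_eq, Matrix.one_apply_eq, smul_eq_mul]
    push_cast
    ring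
  have hLHS : ∑ i ∈ Finset.univ.erase k, ‖charM A f (u d) d μ τ i k‖ ≤ d * (-A k k) := by
    calc ∑ i ∈ Finset.univ.erase k, ‖charM A f (u d) d μ τ i k‖
        = ∑ i ∈ Finset.univ.erase k, d * A i k := by
          apply Finset.sum_congr rfl
          intro i hi
          rw [Δoff i (Finset.ne_of_mem_erase hi)]
          rw [Complex.norm_real, Real.norm_eq_abs, abs_of_nonneg]
          exact mul_nonneg hd0.le (hoff i k (Finset.ne_of_mem_erase hi))
      _ = d * ∑ i ∈ Finset.univ.erase k, A i k := by rw [Finset.mul_sum]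
      _ ≤ d * (-A k k) := mul_le_mul_of_nonneg_left (hcol k) hd0.le
  have hEbound : (Complex.exp (-μ * (τ : ℂ))).re * (u d k * pd2 (f k) (u d k) (u d k))
      ≤ u d k * |pd2 (f k) (u d k) (u d k)| := by
    have hnorm1 : ‖Complex.exp (-μ * (τ : ℂ))‖ ≤ 1 := by
      rw [Complex.norm_exp]
      have : (-μ * (τ : ℂ)).re = -(μ.re * τ) := by
        simp [Complex.mul_re]
      rw [this]
      exact Real.exp_le_one_iff.mpr (by nlinarith)
    have hre1 : |(Complex.exp (-μ * (τ : ℂ))).re| ≤ 1 :=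
      le_trans (Complex.abs_re_le_norm _) hnorm1
    calc (Complex.exp (-μ * (τ : ℂ))).re * (u d k * pd2 (f k) (u d k) (u d k))
        ≤ |(Complex.exp (-μ * (τ : ℂ))).re * (u d k * pd2 (f k) (u d k) (u d k))| :=
          le_abs_self _
      _ = |(Complex.exp (-μ * (τ : ℂ))).re| * (u d k * |pd2 (f k) (u d k) (u d k)|) := by
          rw [abs_mul, abs_mul, abs_of_pos (hpos k)]
      _ ≤ 1 * (u d k * |pd2 (f k) (u d k) (u d k)|) :=
          mul_le_mul_of_nonneg_right hre1 (mul_nonneg (hpos k).le (abs_nonneg _))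
      _ = u d k * |pd2 (f k) (u d k) (u d k)| := one_mul _
  have hRHS : d * (-A k k) < ‖charM A f (u d) d μ τ k k‖ := by
    have hrepart : (charM A f (u d) d μ τ k k).re =
        d * A k k + (f k (u d k, u d k) + u d k * pd1 (f k) (u d k) (u d k))
        + (Complex.exp (-μ * (τ : ℂ))).re * (u d k * pd2 (f k) (u d k) (u d k)) - μ.re := by
      rw [Δdiag]
      simp [Complex.add_re, Complex.sub_re, Complex.mul_re]
    have hnle : -((charM A f (u d) d μ τ k k).re) ≤ ‖charM A f (u d) d μ τ k k‖ := by
      have := Complex.abs_re_le_norm (charM A f (u d) d μ τ k k)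
      cases abs_le.mp this with
      | intro h1 h2 => linarith
    have hkey : d * (-A k k) < -((charM A f (u d) d μ τ k k).re) := by
      rw [hrepart]
      have hcl := hclose k
      simp only [hh] at hcl
      nlinarith [hEbound]
    linarith
  linarith [hLHS, hRHS]
end

section
/- Assume (H1), (H2), and that the pairs (ν_j⁰, θ_j⁰), 1 ≤ j ≤ p, are pairwise distinct. Then the set of pairs (ν,θ) with ν ≥ 0 and θ ∈ [0,2π] for which the diagonal complex matrix diag(u_j⁰ a_j⁰ + u_j⁰ b_j⁰ e^{−iθ} − iν)_{j=1,…,n} is singular is exactly {(ν_q⁰, θ_q⁰) : 1 ≤ q ≤ p}; moreover, for each q, the kernel of this matrix at (ν,θ) = (ν_q⁰, θ_q⁰) is one-dimensional and spanned by the q-th standard basis vector e_q of ℂⁿ. -/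
open Matrix Filter Set

section Aux

private lemma expNegI (θ : ℝ) : Complex.exp (-Complex.I * θ) =
    ((Real.cos θ : ℝ) : ℂ) - ((Real.sin θ : ℝ) : ℂ) * Complex.I := by
  rw [show (-Complex.I * (θ:ℂ)) = ((-θ:ℝ):ℂ)*Complex.I by push_cast; ring, Complex.exp_mul_I,
    ← Complex.ofReal_cos, ← Complex.ofReal_sin, Real.cos_neg, Real.sin_neg]
  push_cast; ring

private lemma zeroIff (u a b ν θ : ℝ) :
    ((u*a:ℝ):ℂ) + ((u*b:ℝ):ℂ) * Complex.exp (-Complex.I * θ) - Complex.I * ν = 0 ↔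
    (u*a + u*b*Real.cos θ = 0 ∧ ν = -(u*b*Real.sin θ)) := by
  rw [expNegI, Complex.ext_iff]
  simp only [Complex.add_re, Complex.sub_re, Complex.mul_re, Complex.mul_im, Complex.add_im,
    Complex.sub_im, Complex.I_re, Complex.I_im, Complex.ofReal_re, Complex.ofReal_im,
    Complex.zero_re, Complex.zero_im]
  constructor
  · rintro ⟨h1, h2⟩; constructor <;> linarith
  · rintro ⟨h1, h2⟩; constructor <;> linarith

private lemma negCase (u a b θ : ℝ) (hu : 0 < u) (hsum : a + b < 0) (hdiff : a - b < 0) :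
    u*a + u*b*Real.cos θ ≠ 0 := by
  have h1 := Real.neg_one_le_cos θ
  have h2 := Real.cos_le_one θ
  rcases le_or_gt 0 b with hb | hb
  · have h3 : 0 ≤ (u*b)*(1 - Real.cos θ) := mul_nonneg (mul_nonneg hu.le hb) (by linarith)
    nlinarith
  · have h3 : 0 ≤ (u*(-b))*(1 + Real.cos θ) :=
      mul_nonneg (mul_nonneg hu.le (by linarith)) (by linarith)
    nlinarith

private lemma posCase (u a b ν θ : ℝ) (hu : 0 < u) (hsum : a + b < 0) (hdiff : 0 < a - b)
    (hν : 0 ≤ ν) (hθ0 : 0 ≤ θ) (hθ1 : θ ≤ 2 * Real.pi) :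
    (u*a + u*b*Real.cos θ = 0 ∧ ν = -(u*b*Real.sin θ)) ↔
    (ν = u * Real.sqrt (b^2 - a^2) ∧ θ = Real.arccos (-a/b)) := by
  have hb : b < 0 := by linarith
  have hbne : b ≠ 0 := ne_of_lt hb
  have hx1 : -1 < -a/b := by rw [lt_div_iff_of_neg hb]; linarith
  have hx2 : -a/b < 1 := by rw [div_lt_iff_of_neg hb]; linarith
  set t0 := Real.arccos (-a/b) with ht0
  have hcos : Real.cos t0 = -a/b := Real.cos_arccos hx1.le hx2.le
  have hsin : Real.sin t0 = Real.sqrt (1 - (-a/b)^2) := Real.sin_arccos _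
  have hsinpos : 0 < Real.sin t0 := by rw [hsin]; apply Real.sqrt_pos.2; nlinarith
  have ht0mem : t0 ∈ Set.Icc 0 Real.pi := ⟨Real.arccos_nonneg _, Real.arccos_le_pi _⟩
  have hkey : -(u * b * Real.sin t0) = u * Real.sqrt (b^2 - a^2) := by
    rw [hsin, show (1 - (-a/b)^2) = (b^2 - a^2) / b^2 by field_simp,
      Real.sqrt_div (by nlinarith : (0:ℝ) ≤ b^2 - a^2), Real.sqrt_sq_eq_abs, abs_of_neg hb]
    field_simp
  constructor
  · rintro ⟨h1, h2⟩
    have hc : Real.cos θ = -a/b := by field_simp; nlinarith [h1]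
    have hθeq : θ = t0 ∨ θ = 2*Real.pi - t0 := by
      rcases le_or_gt θ Real.pi with hle | hgt
      · left
        exact Real.injOn_cos ⟨hθ0, hle⟩ ht0mem (by rw [hc, hcos])
      · right
        have h4 : 2*Real.pi - θ = t0 := by
          apply Real.injOn_cos ⟨by linarith, by linarith [Real.pi_pos]⟩ ht0mem
          rw [Real.cos_two_pi_sub, hc, hcos]
        linarith
    rcases hθeq with rfl | h5
    · exact ⟨by rw [h2, hkey], rfl⟩
    · exfalso
      rw [h5, Real.sin_two_pi_sub] at h2
      nlinarith [mul_pos (mul_pos hu (show 0 < -b by linarith)) hsinpos]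
  · rintro ⟨h1, rfl⟩
    refine ⟨by rw [hcos]; field_simp; ring, by rw [h1, hkey]⟩

private lemma derivDiag (f : ℝ × ℝ → ℝ) (hf : ContDiff ℝ 4 f) (x : ℝ) :
    deriv (fun y => f (y, y)) x = pd1 f x x + pd2 f x x := by
  have hF : DifferentiableAt ℝ f (x, x) := (hf.differentiable (by norm_num)).differentiableAt
  have h1 : HasDerivAt (fun y : ℝ => (y, y)) ((1:ℝ), (1:ℝ)) x :=
    HasDerivAt.prodMk (hasDerivAt_id x) (hasDerivAt_id x)
  have h2 : HasDerivAt (fun y => f (y, y)) (fderiv ℝ f (x, x) (1, 1)) x := by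
    have h2' : HasDerivAt (f ∘ (fun y : ℝ => (y, y))) (fderiv ℝ f (x, x) (1, 1)) x :=
      HasFDerivAt.comp_hasDerivAt x hF.hasFDerivAt h1
    exact h2'
  rw [h2.deriv, pd1, pd2, show ((1:ℝ), (1:ℝ)) = ((1:ℝ), (0:ℝ)) + ((0:ℝ), (1:ℝ)) by simp,
    map_add]

end Aux

theorem stmt14 {n : ℕ} (hn : 2 ≤ n)
    (f : Fin n → ℝ × ℝ → ℝ) (m : Fin n → ℝ)
    -- (H1)
    (hf : ∀ j, ContDiff ℝ 4 (f j)) (hm : ∀ j, 0 < m j) (hf0 : ∀ j, f j (0, 0) = m j)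
    (hg : ∀ j x, (0:ℝ) ≤ x → deriv (fun y => f j (y, y)) x < 0)
    (u0 : Fin n → ℝ) (hu0 : ∀ j, 0 < u0 j ∧ f j (u0 j, u0 j) = 0)
    -- a_j⁰ and b_j⁰
    (a0 b0 : Fin n → ℝ)
    (ha0 : ∀ j, a0 j = pd1 (f j) (u0 j) (u0 j))
    (hb0 : ∀ j, b0 j = pd2 (f j) (u0 j) (u0 j))
    -- (H2)
    (p : ℕ) (hp1 : 1 ≤ p) (hpn : p ≤ n)
    (hH2p : ∀ j : Fin n, (j : ℕ) < p → 0 < a0 j - b0 j)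
    (hH2n : ∀ j : Fin n, p ≤ (j : ℕ) → a0 j - b0 j < 0)
    -- ν_q⁰ and θ_q⁰
    (ν0 θ0 : Fin n → ℝ)
    (hν0 : ∀ j, ν0 j = u0 j * Real.sqrt ((b0 j) ^ 2 - (a0 j) ^ 2))
    (hθ0 : ∀ j, θ0 j = Real.arccos (-a0 j / b0 j))
    -- the pairs (ν_j⁰, θ_j⁰), j < p, are pairwise distinct
    (hdist : ∀ j k : Fin n, (j : ℕ) < p → (k : ℕ) < p → j ≠ k →
      (ν0 j, θ0 j) ≠ (ν0 k, θ0 k)) :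
    (∀ (ν th : ℝ), 0 ≤ ν → th ∈ Set.Icc 0 (2 * Real.pi) →
      ((Matrix.diagonal (fun j => ((u0 j * a0 j : ℝ) : ℂ)
          + ((u0 j * b0 j : ℝ) : ℂ) * Complex.exp (-Complex.I * (th : ℂ))
          - Complex.I * (ν : ℂ))).det = 0 ↔
        ∃ q : Fin n, (q : ℕ) < p ∧ ν = ν0 q ∧ th = θ0 q)) ∧
    (∀ q : Fin n, (q : ℕ) < p → ∀ φ : Fin n → ℂ,
      (Matrix.diagonal (fun j => ((u0 j * a0 j : ℝ) : ℂ)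
          + ((u0 j * b0 j : ℝ) : ℂ) * Complex.exp (-Complex.I * ((θ0 q : ℝ) : ℂ))
          - Complex.I * ((ν0 q : ℝ) : ℂ))).mulVec φ = 0 ↔
        ∃ c : ℂ, φ = c • (Pi.single q (1 : ℂ) : Fin n → ℂ)) := by
  
  have hu : ∀ j, 0 < u0 j := fun j => (hu0 j).1
  have hab : ∀ j, a0 j + b0 j < 0 := by
    intro j
    have hd := hg j (u0 j) (hu j).le
    rw [derivDiag (f j) (hf j) (u0 j)] at hd
    rw [ha0, hb0]; exact hd
  have hνnn : ∀ j, 0 ≤ ν0 j := by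
    intro j; rw [hν0]; exact mul_nonneg (hu j).le (Real.sqrt_nonneg _)
  have hθmem : ∀ j, 0 ≤ θ0 j ∧ θ0 j ≤ 2 * Real.pi := by
    intro j; rw [hθ0]
    exact ⟨Real.arccos_nonneg _, le_trans (Real.arccos_le_pi _) (by linarith [Real.pi_pos])⟩
  constructor
  · intro ν th hν hth
    rw [Matrix.det_diagonal, Finset.prod_eq_zero_iff]
    constructor
    · rintro ⟨j, -, hj⟩
      rw [zeroIff] at hj
      by_cases hjp : (j : ℕ) < p
      · obtain ⟨h1, h2⟩ := (posCase (u0 j) (a0 j) (b0 j) ν th (hu j) (hab j) (hH2p j hjp)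
          hν hth.1 hth.2).1 hj
        exact ⟨j, hjp, by rw [hν0]; exact h1, by rw [hθ0]; exact h2⟩
      · exact absurd hj.1
          (negCase (u0 j) (a0 j) (b0 j) th (hu j) (hab j) (hH2n j (le_of_not_gt hjp)))
    · rintro ⟨q, hq, rfl, rfl⟩
      refine ⟨q, Finset.mem_univ q, (zeroIff _ _ _ _ _).2 ?_⟩
      exact (posCase (u0 q) (a0 q) (b0 q) (ν0 q) (θ0 q) (hu q) (hab q) (hH2p q hq)
        (hνnn q) (hθmem q).1 (hθmem q).2).2 ⟨hν0 q, hθ0 q⟩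
  · intro q hq φ
    have hq0 : ((u0 q * a0 q : ℝ) : ℂ)
        + ((u0 q * b0 q : ℝ) : ℂ) * Complex.exp (-Complex.I * ((θ0 q : ℝ) : ℂ))
        - Complex.I * ((ν0 q : ℝ) : ℂ) = 0 := by
      exact (zeroIff _ _ _ _ _).2 ((posCase (u0 q) (a0 q) (b0 q) (ν0 q) (θ0 q) (hu q) (hab q)
        (hH2p q hq) (hνnn q) (hθmem q).1 (hθmem q).2).2 ⟨hν0 q, hθ0 q⟩)
    have hne : ∀ j, j ≠ q → ((u0 j * a0 j : ℝ) : ℂ)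
        + ((u0 j * b0 j : ℝ) : ℂ) * Complex.exp (-Complex.I * ((θ0 q : ℝ) : ℂ))
        - Complex.I * ((ν0 q : ℝ) : ℂ) ≠ 0 := by
      intro j hj hz
      rw [zeroIff] at hz
      by_cases hjp : (j : ℕ) < p
      · obtain ⟨h1, h2⟩ := (posCase (u0 j) (a0 j) (b0 j) (ν0 q) (θ0 q) (hu j) (hab j)
          (hH2p j hjp) (hνnn q) (hθmem q).1 (hθmem q).2).1 hz
        have heq : (ν0 j, θ0 j) = (ν0 q, θ0 q) := by
          rw [Prod.ext_iff]
          exact ⟨by rw [hν0 j]; exact h1.symm, by rw [hθ0 j]; exact h2.symm⟩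
        exact hdist j q hjp hq hj heq
      · exact negCase (u0 j) (a0 j) (b0 j) (θ0 q) (hu j) (hab j)
          (hH2n j (le_of_not_gt hjp)) hz.1
    constructor
    · intro h
      refine ⟨φ q, funext fun j => ?_⟩
      by_cases hj : j = q
      · subst hj; simp
      · have hval := congrFun h j
        rw [Matrix.mulVec_diagonal] at hval
        have : φ j = 0 := by
          rcases mul_eq_zero.1 hval with h' | h'
          · exact absurd h' (hne j hj)
          · exact h'
        simp [this, Pi.single_eq_of_ne hj]
    · rintro ⟨c, rfl⟩
      funext j
      rw [Matrix.mulVec_diagonal]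
      by_cases hj : j = q
      · subst hj
        simp only [Pi.smul_apply, Pi.single_eq_same, smul_eq_mul, mul_one, hq0, zero_mul,
          Pi.zero_apply]
      · simp [Pi.single_eq_of_ne hj]
end

section
/- For the logistic patch model there exist δ > 0 and functions ν, θ : [0,δ) → ℝ, differentiable at 0, with ν(0) = m_q̂ and θ(0) = π/2, such that for every d ∈ (0,δ) the matrix dA + diag(m_j − U(d)_j) − e^{−iθ(d)} diag(U(d)_j) − iν(d)I ∈ M_n(ℂ) is singular. For any such pair of functions, ν'(0) = (1/m_q̂) Σ_{k=1}^n α_{q̂k} m_k and θ'(0) = (1/m_q̂²) Σ_{k≠q̂} α_{q̂k} m_k, and hence the first Hopf bifurcation value τ(d) := θ(d)/ν(d) satisfies τ(0) = π/(2m_q̂) and τ'(0) = T(A)/m_q̂², where T(A) := −(π/2)α_{q̂q̂} + (1 − π/2)(1/m_q̂) Σ_{k≠q̂} α_{q̂k} m_k. -/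
open Matrix Filter Set
open Topology

/-- The characteristic matrix of the logistic patch model at a purely imaginary
candidate root: `dA + diag(m_j − U(d)_j) − e^{−iθ} diag(U(d)_j) − iν I`. -/
noncomputable def logMat {n : ℕ} (A : Matrix (Fin n) (Fin n) ℝ) (m : Fin n → ℝ)
    (U : ℝ → Fin n → ℝ) (d ν th : ℝ) : Matrix (Fin n) (Fin n) ℂ :=
  (d : ℂ) • A.map (fun x : ℝ => (x : ℂ))
    + Matrix.diagonal (fun j => ((m j - U d j : ℝ) : ℂ))
    - Complex.exp (-Complex.I * (th : ℂ)) •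
        Matrix.diagonal (fun j => ((U d j : ℝ) : ℂ))
    - (Complex.I * (ν : ℂ)) • (1 : Matrix (Fin n) (Fin n) ℂ)

lemma expI : Complex.exp (-Complex.I * ((Real.pi/2 : ℝ) : ℂ)) = -Complex.I := by
  rw [show -Complex.I * ((Real.pi/2 : ℝ) : ℂ) = (-(Real.pi/2 : ℝ) : ℂ) * Complex.I by
    push_cast; ring, Complex.exp_mul_I]
  push_cast
  rw [Complex.cos_neg, Complex.sin_neg, Complex.cos_pi_div_two, Complex.sin_pi_div_two]
  ring

lemma logMat_apply {n : ℕ} (A : Matrix (Fin n) (Fin n) ℝ) (m : Fin n → ℝ)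
    (U : ℝ → Fin n → ℝ) (d ν th : ℝ) (j k : Fin n) :
    logMat A m U d ν th j k = (d : ℂ) * (A j k) +
      (if j = k then ((m j - U d j : ℝ) : ℂ)
        - Complex.exp (-Complex.I * (th : ℂ)) * ((U d j : ℝ) : ℂ)
        - Complex.I * (ν : ℂ) else 0) := by
  by_cases h : j = k
  · subst h
    simp [logMat, Matrix.sub_apply, Matrix.add_apply, Matrix.smul_apply,
      Matrix.diagonal_apply_eq, Matrix.one_apply_eq, Matrix.map_apply, smul_eq_mul]
    ring
  · simp [logMat, Matrix.sub_apply, Matrix.add_apply, Matrix.smul_apply,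
      Matrix.diagonal_apply_ne _ h, Matrix.one_apply_ne h, Matrix.map_apply, h, smul_eq_mul]

lemma det_hasDerivWithinAt {n : ℕ} (q : Fin n) {M : ℝ → Matrix (Fin n) (Fin n) ℂ}
    {M' : Matrix (Fin n) (Fin n) ℂ} {c : Fin n → ℂ} {s : Set ℝ} {x : ℝ}
    (hM : ∀ j k, HasDerivWithinAt (fun d => M d j k) (M' j k) s x)
    (hM0 : M x = Matrix.diagonal c) (hcq : c q = 0) :
    HasDerivWithinAt (fun d => (M d).det)
      (M' q q * ∏ k ∈ Finset.univ.erase q, c k) s x := by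
  classical
  have key : HasDerivWithinAt
      (fun d => ∑ σ : Equiv.Perm (Fin n), ((Equiv.Perm.sign σ : ℤ) : ℂ) * ∏ i, M d (σ i) i)
      (∑ σ : Equiv.Perm (Fin n), ((Equiv.Perm.sign σ : ℤ) : ℂ) *
        (∑ i, (∏ j ∈ Finset.univ.erase i, M x (σ j) j) • M' (σ i) i)) s x := by
    apply HasDerivWithinAt.fun_sum
    intro σ _
    exact (HasDerivWithinAt.fun_finset_prod (fun i _ => hM (σ i) i)).const_mul _
  have hfun : (fun d => (M d).det)
      = fun d => ∑ σ : Equiv.Perm (Fin n), ((Equiv.Perm.sign σ : ℤ) : ℂ) * ∏ i, M d (σ i) i := by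
    funext d; rw [Matrix.det_apply']
  have heq : (∑ σ : Equiv.Perm (Fin n), ((Equiv.Perm.sign σ : ℤ) : ℂ) *
        (∑ i, (∏ j ∈ Finset.univ.erase i, M x (σ j) j) • M' (σ i) i))
      = M' q q * ∏ k ∈ Finset.univ.erase q, c k := by
    rw [Finset.sum_eq_single_of_mem (1 : Equiv.Perm (Fin n)) (Finset.mem_univ _)]
    · simp only [Equiv.Perm.sign_one, Units.val_one, Int.cast_one, one_mul,
        Equiv.Perm.one_apply]
      rw [Finset.sum_eq_single_of_mem q (Finset.mem_univ _)]
      · rw [hM0]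
        simp only [Matrix.diagonal_apply_eq, smul_eq_mul]
        ring
      · intro i _ hiq
        have hmem : q ∈ Finset.univ.erase i := Finset.mem_erase.mpr ⟨fun h => hiq h.symm, Finset.mem_univ _⟩
        rw [Finset.prod_eq_zero hmem (by rw [hM0, Matrix.diagonal_apply_eq, hcq]), zero_smul]
    · intro σ _ hσ
      have : (∑ i, (∏ j ∈ Finset.univ.erase i, M x (σ j) j) • M' (σ i) i) = 0 := by
        apply Finset.sum_eq_zero
        intro i _
        obtain ⟨a, ha⟩ : ∃ a, σ a ≠ a := by
          by_contra h
          push_neg at h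
          exact hσ (Equiv.ext fun y => by simp [h y])
        have ha2 : σ (σ a) ≠ σ a := fun h => ha (σ.injective h)
        obtain ⟨jj, hjmem, hjne⟩ : ∃ jj, jj ∈ Finset.univ.erase i ∧ σ jj ≠ jj := by
          by_cases hai : a = i
          · exact ⟨σ a, Finset.mem_erase.mpr ⟨hai ▸ ha, Finset.mem_univ _⟩, ha2⟩
          · exact ⟨a, Finset.mem_erase.mpr ⟨hai, Finset.mem_univ _⟩, ha⟩
        rw [Finset.prod_eq_zero hjmem (by rw [hM0, Matrix.diagonal_apply_ne _ hjne]), zero_smul]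
      rw [this, mul_zero]
  rw [hfun, ← heq]
  exact key

lemma deriv_eq_zero_of_eventually_zero {F : Type*} [NormedAddCommGroup F] [NormedSpace ℝ F]
    {f : ℝ → F} {v : F} {δ : ℝ} (hδ : 0 < δ)
    (hf : HasDerivWithinAt f v (Set.Ici 0) 0)
    (h0 : ∀ d, 0 ≤ d → d < δ → f d = 0) : v = 0 := by
  have hmem : Set.Ici (0:ℝ) ∩ Set.Iio δ ∈ 𝓝[Set.Ici 0] (0:ℝ) :=
    Filter.inter_mem self_mem_nhdsWithin (nhdsWithin_le_nhds (Iio_mem_nhds hδ))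
  have hev : f =ᶠ[𝓝[Set.Ici 0] (0:ℝ)] (fun _ => 0) :=
    Filter.eventuallyEq_of_mem hmem (fun d hd => h0 d hd.1 hd.2)
  have h2 : HasDerivWithinAt f 0 (Set.Ici 0) 0 :=
    (hasDerivWithinAt_const 0 _ 0).congr_of_eventuallyEq hev (h0 0 le_rfl hδ)
  have u1 := hf.derivWithin (uniqueDiffOn_Ici 0 0 Set.self_mem_Ici)
  have u2 := h2.derivWithin (uniqueDiffOn_Ici 0 0 Set.self_mem_Ici)
  rw [← u1, u2]

lemma contDiffAt_finsetProd {ι E : Type*} [NormedAddCommGroup E] [NormedSpace ℝ E] [DecidableEq ι]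
    {f : ι → E → ℂ} {s : Finset ι} {x : E}
    (h : ∀ i ∈ s, ContDiffAt ℝ 1 (f i) x) :
    ContDiffAt ℝ 1 (fun x => ∏ i ∈ s, f i x) x := by
  classical
  induction s using Finset.induction with
  | empty => simpa using contDiffAt_const (c := (1:ℂ))
  | insert a t hni ih =>
    simp only [Finset.prod_insert hni]
    exact (h a (Finset.mem_insert_self _ _)).mul (ih fun i hi => h i (Finset.mem_insert_of_mem hi))

lemma hasDerivWithinAt_ofReal {g : ℝ → ℝ} {g' : ℝ} {s : Set ℝ} {x : ℝ}
    (h : HasDerivWithinAt g g' s x) :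
    HasDerivWithinAt (fun t => ((g t : ℝ) : ℂ)) (g' : ℂ) s x := by
  exact h.ofReal_comp


set_option maxHeartbeats 2000000 in
theorem stmt18 {n : ℕ} (hn : 2 ≤ n) (A : Matrix (Fin n) (Fin n) ℝ) (m : Fin n → ℝ)
    -- (H0)
    (hoff : ∀ j k, j ≠ k → 0 ≤ A j k)
    (hirr : ∀ S : Finset (Fin n), S.Nonempty → S ≠ Finset.univ →
      ∃ j ∉ S, ∃ k ∈ S, 0 < A j k)
    (hcol : ∀ j, ∑ k ∈ Finset.univ.erase j, A k j ≤ -A j j)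
    (hstr : ∃ j, ∑ k ∈ Finset.univ.erase j, A k j < -A j j)
    -- intrinsic growth rates: positive and pairwise distinct, maximal at q̂
    (hm : ∀ j, 0 < m j) (hmd : ∀ j k : Fin n, j ≠ k → m j ≠ m k)
    (qhat : Fin n) (hq : ∀ j, m j ≤ m qhat)
    -- the critical dispersal rate d_*
    (dstar : ℝ) (hds : 0 < dstar)
    (hsd : specBound (dstar • A + Matrix.diagonal m) = 0)
    -- the positive equilibrium family of the logistic model, extended to d = 0
    (δ0 : ℝ) (hδ00 : 0 < δ0) (hδ0s : δ0 ≤ dstar)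
    (U : ℝ → Fin n → ℝ) (hU0 : U 0 = m) (hUC : ContDiffOn ℝ 1 U (Set.Ico 0 δ0))
    (hUeq : ∀ d, 0 < d → d < δ0 → (∀ j, 0 < U d j) ∧
      ∀ j, d * ∑ k, A j k * U d k + U d j * (m j - U d j) = 0) :
    (∃ δ, 0 < δ ∧ δ ≤ δ0 ∧ ∃ ν θ : ℝ → ℝ, ∃ ν' θ' : ℝ,
      HasDerivWithinAt ν ν' (Set.Ici 0) 0 ∧ HasDerivWithinAt θ θ' (Set.Ici 0) 0 ∧
      ν 0 = m qhat ∧ θ 0 = Real.pi / 2 ∧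
      ∀ d, 0 < d → d < δ → (logMat A m U d (ν d) (θ d)).det = 0) ∧
    (∀ (δ : ℝ) (ν θ : ℝ → ℝ) (ν' θ' : ℝ), 0 < δ → δ ≤ δ0 →
      HasDerivWithinAt ν ν' (Set.Ici 0) 0 → HasDerivWithinAt θ θ' (Set.Ici 0) 0 →
      ν 0 = m qhat → θ 0 = Real.pi / 2 →
      (∀ d, 0 < d → d < δ → (logMat A m U d (ν d) (θ d)).det = 0) →
      ν' = (1 / m qhat) * ∑ k, A qhat k * m k ∧
      θ' = (1 / (m qhat) ^ 2) * ∑ k ∈ Finset.univ.erase qhat, A qhat k * m k ∧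
      θ 0 / ν 0 = Real.pi / (2 * m qhat) ∧
      HasDerivWithinAt (fun d => θ d / ν d)
        ((-(Real.pi / 2) * A qhat qhat
          + (1 - Real.pi / 2) * (1 / m qhat) * ∑ k ∈ Finset.univ.erase qhat, A qhat k * m k)
          / (m qhat) ^ 2)
        (Set.Ici 0) 0) := by
  classical
  have hmq : (0:ℝ) < m qhat := hm qhat
  -- the derivative of U at 0 from the right
  set V : Fin n → ℝ := derivWithin U (Set.Ico 0 δ0) 0 with hVdef
  have hdiff : DifferentiableOn ℝ U (Set.Ico 0 δ0) := hUC.differentiableOn one_ne_zero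
  have hVIci : HasDerivWithinAt U V (Set.Ici 0) 0 := by
    have h1 : HasDerivWithinAt U V (Set.Ico 0 δ0) 0 :=
      (hdiff 0 ⟨le_rfl, hδ00⟩).hasDerivWithinAt
    rw [show Set.Ico (0:ℝ) δ0 = Set.Ici 0 ∩ Set.Iio δ0 from (Set.Ici_inter_Iio).symm] at h1
    exact (hasDerivWithinAt_inter (Iio_mem_nhds hδ00)).mp h1
  have hVc : ∀ j, HasDerivWithinAt (fun d => U d j) (V j) (Set.Ici 0) 0 := fun j => by
    exact hasDerivWithinAt_pi.mp hVIci j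
  have hVval : ∀ j, m j * V j = ∑ k, A j k * m k := by
    intro j
    have hS : HasDerivWithinAt (fun d => ∑ k, A j k * U d k) (∑ k, A j k * V k)
        (Set.Ici 0) 0 := HasDerivWithinAt.fun_sum fun k _ => (hVc k).const_mul (A j k)
    have hg := ((hasDerivWithinAt_id (0:ℝ) (Set.Ici 0)).mul hS).add
      ((hVc j).mul (((hasDerivWithinAt_const (0:ℝ) (Set.Ici 0) (m j))).sub (hVc j)))
    have hz := deriv_eq_zero_of_eventually_zero hδ00 hg ?_
    · simp only [hU0, id_eq, Pi.sub_apply] at hz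
      ring_nf at hz ⊢
      linarith [hz]
    · intro d hd0 hdδ
      rcases eq_or_lt_of_le hd0 with h | h
      · simp [← h, hU0]
      · exact (hUeq d h hdδ).2 j
  -- the diagonal of the characteristic matrix at d = 0
  set c : Fin n → ℂ := fun j => Complex.I * ((m j - m qhat : ℝ) : ℂ) with hcdef
  set P : ℂ := ∏ k ∈ Finset.univ.erase qhat, c k with hPdef
  have hcq : c qhat = 0 := by simp [hcdef]
  have hPne : P ≠ 0 := by
    rw [hPdef]
    apply Finset.prod_ne_zero_iff.mpr
    intro k hk
    have hne : m k ≠ m qhat := hmd k qhat (Finset.mem_erase.mp hk).1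
    exact mul_ne_zero Complex.I_ne_zero (by exact_mod_cast sub_ne_zero.mpr hne)
  constructor
  · -- existence via the inverse function theorem
    set Ue : ℝ → Fin n → ℝ := fun d => if 0 ≤ d then U d else U 0 + d • V with hUedef
    have hUe_pos : ∀ d : ℝ, 0 ≤ d → Ue d = U d := fun d hd => by simp [hUedef, hd]
    have hUe0 : Ue 0 = m := by rw [hUe_pos 0 le_rfl, hU0]
    set DW : ℝ → Fin n → ℝ := fun d => derivWithin U (Set.Ico 0 δ0) d with hDWdef
    set W : ℝ → Fin n → ℝ := fun d => if d ≤ 0 then V else DW d with hWdef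
    have haff : ∀ x : ℝ, HasDerivAt (fun d : ℝ => U 0 + d • V) V x := by
      intro x
      simpa using ((hasDerivAt_id x).smul_const V).const_add (U 0)
    have hDWcont : ContinuousOn DW (Set.Ico 0 δ0) :=
      hUC.continuousOn_derivWithin (uniqueDiffOn_Ico 0 δ0) le_rfl
    have hWeq : Set.EqOn W DW (Set.Ico 0 δ0) := by
      intro d hd
      rcases eq_or_lt_of_le hd.1 with h | h
      · rw [hWdef]; simp only [← h, le_refl, if_pos]; rfl
      · rw [hWdef]; simp only [not_le.mpr h, if_false]
    have hUeCD : ContDiffAt ℝ 1 Ue 0 := by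
      have h1 : ContDiffAt ℝ ((0 : ℕ) + 1) Ue 0 := by
        rw [contDiffAt_succ_iff_hasFDerivAt]
        refine ⟨fun d => ContinuousLinearMap.smulRight (1 : ℝ →L[ℝ] ℝ) (W d),
          ⟨Set.Ioo (-1) δ0, Ioo_mem_nhds (by norm_num) hδ00, ?_⟩, ?_⟩
        · intro x hx
          show HasFDerivAt Ue ((1 : ℝ →L[ℝ] ℝ).smulRight (W x)) x
          rcases lt_trichotomy x 0 with hlt | heq | hgt
          · have hval : W x = V := by simp [hWdef, hlt.le]
            rw [hval]
            refine ((haff x).hasFDerivAt).congr_of_eventuallyEq ?_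
            filter_upwards [Iio_mem_nhds hlt] with d hd
            simp [hUedef, not_le.mpr (Set.mem_Iio.mp hd)]
          · subst heq
            have hval : W 0 = V := by simp [hWdef]
            rw [hval]
            have hIci : HasDerivWithinAt Ue V (Set.Ici 0) 0 :=
              hVIci.congr (fun d hd => hUe_pos d hd) (hUe_pos 0 le_rfl)
            have hIic : HasDerivWithinAt Ue V (Set.Iic 0) 0 := by
              refine ((haff 0).hasDerivWithinAt).congr (fun d hd => ?_) ?_
              · rcases eq_or_lt_of_le (Set.mem_Iic.mp hd) with h | h
                · rw [h, hUe_pos 0 le_rfl]; simp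
                · simp [hUedef, not_le.mpr h]
              · rw [hUe_pos 0 le_rfl]; simp
            have hu := hIic.union hIci
            rw [Set.Iic_union_Ici] at hu
            exact (hu.hasDerivAt Filter.univ_mem).hasFDerivAt
          · have hval : W x = DW x := by simp [hWdef, not_le.mpr hgt]
            rw [hval]
            have hxm : Set.Ico (0:ℝ) δ0 ∈ 𝓝 x := Ico_mem_nhds hgt hx.2
            have hdx : DifferentiableAt ℝ U x := (hdiff x ⟨hgt.le, hx.2⟩).differentiableAt hxm
            have hda : HasDerivAt U (DW x) x := by
              rw [hDWdef]
              simp only [derivWithin_of_mem_nhds hxm]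
              exact hdx.hasDerivAt
            refine (hda.hasFDerivAt).congr_of_eventuallyEq ?_
            filter_upwards [Ioi_mem_nhds hgt] with d hd
            exact hUe_pos d (Set.mem_Ioi.mp hd).le
        · rw [show ((0:ℕ) : WithTop ℕ∞) = 0 from rfl, contDiffAt_zero]
          refine ⟨Set.Ioo (-1) δ0, Ioo_mem_nhds (by norm_num) hδ00, ?_⟩
          have hWcont : ContinuousOn W (Set.Ioo (-1) δ0) := by
            intro x hx
            rcases lt_trichotomy x 0 with hlt | heq | hgt
            · refine ContinuousWithinAt.congr_of_eventuallyEq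
                (continuousWithinAt_const : ContinuousWithinAt (fun _ => V) _ _) ?_
                (by simp [hWdef, hlt.le])
              filter_upwards [mem_nhdsWithin_of_mem_nhds (Iio_mem_nhds hlt)] with d hd
              simp [hWdef, (Set.mem_Iio.mp hd).le]
            · subst heq
              have hsub : Set.Ioo (-1:ℝ) δ0 ⊆ Set.Iic 0 ∪ Set.Ico 0 δ0 := by
                intro d hd
                rcases le_or_gt d 0 with h | h
                · exact Or.inl h
                · exact Or.inr ⟨h.le, hd.2⟩
              refine ContinuousWithinAt.mono ?_ hsub
              refine ContinuousWithinAt.union ?_ ?_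
              · refine ContinuousWithinAt.congr
                  (continuousWithinAt_const : ContinuousWithinAt (fun _ => V) _ _)
                  (fun d hd => ?_) (by simp [hWdef])
                simp [hWdef, Set.mem_Iic.mp hd]
              · exact ((hDWcont 0 ⟨le_rfl, hδ00⟩).congr hWeq (hWeq ⟨le_rfl, hδ00⟩))
            · have hca : ContinuousAt DW x :=
                (hDWcont x ⟨hgt.le, hx.2⟩).continuousAt (Ico_mem_nhds hgt hx.2)
              refine (hca.congr ?_).continuousWithinAt
              filter_upwards [Ioi_mem_nhds hgt] with d hd
              simp [hWdef, not_le.mpr (Set.mem_Ioi.mp hd)]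
          exact fun x hx => ((ContinuousLinearMap.smulRightL ℝ ℝ (Fin n → ℝ)
            (1 : ℝ →L[ℝ] ℝ)).continuous.comp_continuousOn hWcont) x hx
      simpa using h1
    -- the determinant as a smooth function of (d, ν, θ)
    set P0 : ℝ × ℝ × ℝ := ((0:ℝ), (m qhat, Real.pi / 2)) with hP0def
    set Fdet : ℝ × ℝ × ℝ → ℂ := fun z => (logMat A m Ue z.1 z.2.1 z.2.2).det with hFdef
    have hFcd : ContDiffAt ℝ 1 Fdet P0 := by
      have hfun : Fdet = fun z : ℝ × ℝ × ℝ =>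
          ∑ σ : Equiv.Perm (Fin n), ((Equiv.Perm.sign σ : ℤ) : ℂ) *
            ∏ i, logMat A m Ue z.1 z.2.1 z.2.2 (σ i) i := by
        funext z; rw [hFdef]; exact Matrix.det_apply' _
      rw [hfun]
      apply ContDiffAt.sum
      intro σ _
      apply ContDiffAt.mul contDiffAt_const
      apply contDiffAt_finsetProd
      intro i _
      have hent : (fun z : ℝ × ℝ × ℝ => logMat A m Ue z.1 z.2.1 z.2.2 (σ i) i)
          = fun z : ℝ × ℝ × ℝ => ((z.1 : ℝ) : ℂ) * (A (σ i) i) +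
            (if σ i = i then ((m (σ i) - Ue z.1 (σ i) : ℝ) : ℂ)
              - Complex.exp (-Complex.I * ((z.2.2 : ℝ) : ℂ)) * ((Ue z.1 (σ i) : ℝ) : ℂ)
              - Complex.I * ((z.2.1 : ℝ) : ℂ) else 0) := by
        funext z; exact logMat_apply A m Ue z.1 z.2.1 z.2.2 (σ i) i
      rw [hent]
      have hz1 : ContDiffAt ℝ 1 (fun z : ℝ × ℝ × ℝ => ((z.1 : ℝ) : ℂ)) P0 :=
        (Complex.ofRealCLM.contDiff.comp contDiff_fst).contDiffAt
      have hUj : ContDiffAt ℝ 1 (fun z : ℝ × ℝ × ℝ => Ue z.1 (σ i)) P0 := by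
        have h1 : ContDiffAt ℝ 1 (fun d : ℝ => Ue d (σ i)) 0 :=
          ContDiffAt.comp 0
            ((ContinuousLinearMap.proj (σ i) (R := ℝ)
              (φ := fun _ : Fin n => ℝ)).contDiff.contDiffAt) hUeCD
        exact ContDiffAt.comp P0 h1 contDiff_fst.contDiffAt
      have hUjC : ContDiffAt ℝ 1 (fun z : ℝ × ℝ × ℝ => ((Ue z.1 (σ i) : ℝ) : ℂ)) P0 :=
        ContDiffAt.comp P0 Complex.ofRealCLM.contDiff.contDiffAt hUj
      have hνC : ContDiffAt ℝ 1 (fun z : ℝ × ℝ × ℝ => ((z.2.1 : ℝ) : ℂ)) P0 :=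
        (Complex.ofRealCLM.contDiff.comp (contDiff_fst.comp contDiff_snd)).contDiffAt
      have hθC : ContDiffAt ℝ 1 (fun z : ℝ × ℝ × ℝ => ((z.2.2 : ℝ) : ℂ)) P0 :=
        (Complex.ofRealCLM.contDiff.comp (contDiff_snd.comp contDiff_snd)).contDiffAt
      have hexpC : ContDiffAt ℝ 1
          (fun z : ℝ × ℝ × ℝ => Complex.exp (-Complex.I * ((z.2.2 : ℝ) : ℂ))) P0 :=
        (contDiffAt_const.mul hθC).cexp
      have hdiagC : ContDiffAt ℝ 1
          (fun z : ℝ × ℝ × ℝ => ((m (σ i) - Ue z.1 (σ i) : ℝ) : ℂ)) P0 :=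
        ContDiffAt.comp P0 Complex.ofRealCLM.contDiff.contDiffAt (contDiffAt_const.sub hUj)
      by_cases h : σ i = i
      · simp only [if_pos h]
        exact (hz1.mul contDiffAt_const).add
          ((hdiagC.sub (hexpC.mul hUjC)).sub (contDiffAt_const.mul hνC))
      · simp only [if_neg h]
        exact (hz1.mul contDiffAt_const).add contDiffAt_const
    -- derivative data of Fdet at P0
    set L : (ℝ × ℝ × ℝ) →L[ℝ] ℂ := fderiv ℝ Fdet P0 with hLdef
    have hFd : HasFDerivAt Fdet L P0 := (hFcd.differentiableAt one_ne_zero).hasFDerivAt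
    have hFstrict : HasStrictFDerivAt Fdet L P0 := hFcd.hasStrictFDerivAt one_ne_zero
    have hlog0 : ∀ νv θv : ℝ, logMat A m Ue 0 νv θv =
        Matrix.diagonal (fun j => - Complex.exp (-Complex.I * (θv : ℂ)) * (m j : ℂ)
          - Complex.I * (νv : ℂ)) := by
      intro νv θv
      ext j k
      rw [logMat_apply]
      by_cases h : j = k
      · subst h
        rw [if_pos rfl, Matrix.diagonal_apply_eq, hUe0]
        push_cast
        ring
      · rw [if_neg h, Matrix.diagonal_apply_ne _ h]
        push_cast
        ring
    have hdiagc : logMat A m Ue 0 (m qhat) (Real.pi / 2) = Matrix.diagonal c := by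
      rw [hlog0]
      have hfc : (fun j => -Complex.exp (-Complex.I * ((Real.pi / 2 : ℝ) : ℂ)) * ((m j : ℝ) : ℂ)
          - Complex.I * ((m qhat : ℝ) : ℂ)) = c := by
        funext j
        rw [expI]
        simp only [hcdef]
        push_cast
        ring
      rw [hfc]
    -- the partial derivative in ν
    have hwνexpl : HasDerivAt (fun t : ℝ => Fdet ((0:ℝ), (m qhat + t, Real.pi / 2)))
        ((-Complex.I) * P) 0 := by
      rw [← hasDerivWithinAt_univ]
      have hEnt : ∀ j k, HasDerivWithinAt
          (fun t : ℝ => logMat A m Ue 0 (m qhat + t) (Real.pi / 2) j k)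
          ((Matrix.of fun (j k : Fin n) =>
            if j = k then -Complex.I else 0 : Matrix (Fin n) (Fin n) ℂ) j k)
          Set.univ 0 := by
        intro j k
        have hfun : (fun t : ℝ => logMat A m Ue 0 (m qhat + t) (Real.pi / 2) j k)
            = fun t : ℝ => Matrix.diagonal
              (fun j => - Complex.exp (-Complex.I * ((Real.pi / 2 : ℝ) : ℂ)) * (m j : ℂ)
                - Complex.I * ((m qhat + t : ℝ) : ℂ)) j k := by
          funext t; rw [hlog0]
        rw [hfun]
        by_cases h : j = k
        · subst h
          simp only [Matrix.diagonal_apply_eq, Matrix.of_apply, eq_self_iff_true, if_true]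
          have hbase : HasDerivWithinAt (fun t : ℝ => ((m qhat + t : ℝ) : ℂ)) 1 Set.univ 0 := by
            have := hasDerivWithinAt_ofReal
              ((hasDerivWithinAt_id (0:ℝ) Set.univ).const_add (m qhat))
            rwa [Complex.ofReal_one] at this
          have := ((hbase.const_mul Complex.I).const_sub
            (- Complex.exp (-Complex.I * ((Real.pi / 2 : ℝ) : ℂ)) * (m j : ℂ)))
          refine this.congr_deriv ?_
          ring
        · simp only [Matrix.diagonal_apply_ne _ h, Matrix.of_apply, if_neg h]
          exact hasDerivWithinAt_const _ _ _
      have hM0' : logMat A m Ue 0 (m qhat + 0) (Real.pi / 2) = Matrix.diagonal c := by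
        rw [add_zero]; exact hdiagc
      have := det_hasDerivWithinAt qhat hEnt hM0' hcq
      refine this.congr_deriv ?_
      simp [Matrix.of_apply, hPdef]
    -- the partial derivative in θ
    have hwθexpl : HasDerivAt (fun t : ℝ => Fdet ((0:ℝ), (m qhat, Real.pi / 2 + t)))
        (((m qhat : ℝ) : ℂ) * P) 0 := by
      rw [← hasDerivWithinAt_univ]
      have hEnt : ∀ j k, HasDerivWithinAt
          (fun t : ℝ => logMat A m Ue 0 (m qhat) (Real.pi / 2 + t) j k)
          ((Matrix.of fun (j k : Fin n) =>
            if j = k then ((m j : ℝ) : ℂ) else 0 : Matrix (Fin n) (Fin n) ℂ) j k)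
          Set.univ 0 := by
        intro j k
        have hfun : (fun t : ℝ => logMat A m Ue 0 (m qhat) (Real.pi / 2 + t) j k)
            = fun t : ℝ => Matrix.diagonal
              (fun j => - Complex.exp (-Complex.I * ((Real.pi / 2 + t : ℝ) : ℂ)) * (m j : ℂ)
                - Complex.I * ((m qhat : ℝ) : ℂ)) j k := by
          funext t; rw [hlog0]
        rw [hfun]
        by_cases h : j = k
        · subst h
          simp only [Matrix.diagonal_apply_eq, Matrix.of_apply, eq_self_iff_true, if_true]
          have hbase : HasDerivWithinAt (fun t : ℝ => ((Real.pi / 2 + t : ℝ) : ℂ)) 1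
              Set.univ 0 := by
            have := hasDerivWithinAt_ofReal
              ((hasDerivWithinAt_id (0:ℝ) Set.univ).const_add (Real.pi / 2))
            rwa [Complex.ofReal_one] at this
          have hexp := ((hbase.const_mul (-Complex.I)).cexp).neg
          have := (hexp.mul_const ((m j : ℝ) : ℂ)).sub_const (Complex.I * ((m qhat : ℝ) : ℂ))
          refine this.congr_deriv ?_
          rw [add_zero, expI]
          ring_nf
          rw [Complex.I_sq]
          ring
        · simp only [Matrix.diagonal_apply_ne _ h, Matrix.of_apply, if_neg h]
          exact hasDerivWithinAt_const _ _ _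
      have hM0' : logMat A m Ue 0 (m qhat) (Real.pi / 2 + 0) = Matrix.diagonal c := by
        rw [add_zero]; exact hdiagc
      have := det_hasDerivWithinAt qhat hEnt hM0' hcq
      refine this.congr_deriv ?_
      simp [Matrix.of_apply, hPdef]
    have hpν : HasDerivAt (fun t : ℝ => (((0:ℝ), (m qhat + t, Real.pi / 2)) : ℝ × ℝ × ℝ))
        (((0:ℝ), ((1:ℝ), (0:ℝ))) : ℝ × ℝ × ℝ) 0 :=
      (hasDerivAt_const _ _).prodMk
        (((hasDerivAt_id 0).const_add (m qhat)).prodMk (hasDerivAt_const _ _))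
    have hpθ : HasDerivAt (fun t : ℝ => (((0:ℝ), (m qhat, Real.pi / 2 + t)) : ℝ × ℝ × ℝ))
        (((0:ℝ), ((0:ℝ), (1:ℝ))) : ℝ × ℝ × ℝ) 0 :=
      (hasDerivAt_const _ _).prodMk
        ((hasDerivAt_const _ _).prodMk ((hasDerivAt_id 0).const_add (Real.pi / 2)))
    have hwν : L (((0:ℝ), ((1:ℝ), (0:ℝ)))) = (-Complex.I) * P := by
      have hchain := hFd.comp_hasDerivAt_of_eq 0 hpν (by rw [hP0def]; simp)
      exact hchain.unique hwνexpl
    have hwθ : L (((0:ℝ), ((0:ℝ), (1:ℝ)))) = ((m qhat : ℝ) : ℂ) * P := by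
      have hchain := hFd.comp_hasDerivAt_of_eq 0 hpθ (by rw [hP0def]; simp)
      exact hchain.unique hwθexpl
    -- the full derivative of G is invertible
    set T : (ℝ × ℝ × ℝ) →L[ℝ] ℝ × ℂ := (ContinuousLinearMap.fst ℝ ℝ (ℝ × ℝ)).prod L with hTdef
    have hLsplit : ∀ z : ℝ × ℝ × ℝ,
        L z = z.1 • L (((1:ℝ), ((0:ℝ), (0:ℝ)))) + z.2.1 • L (((0:ℝ), ((1:ℝ), (0:ℝ))))
          + z.2.2 • L (((0:ℝ), ((0:ℝ), (1:ℝ)))) := by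
      intro z
      have hzdec : z = z.1 • (((1:ℝ), ((0:ℝ), (0:ℝ))) : ℝ × ℝ × ℝ)
          + z.2.1 • (((0:ℝ), ((1:ℝ), (0:ℝ))) : ℝ × ℝ × ℝ)
          + z.2.2 • (((0:ℝ), ((0:ℝ), (1:ℝ))) : ℝ × ℝ × ℝ) := by
        ext <;> simp
      conv_lhs => rw [hzdec]
      simp only [ContinuousLinearMap.map_add, ContinuousLinearMap.map_smul]
    have hTinj : Function.Injective T := by
      refine (injective_iff_map_eq_zero T).mpr ?_
      rintro ⟨a, b, cc⟩ hz
      have h1 : a = 0 := congrArg Prod.fst hz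
      have h2 : L (a, b, cc) = 0 := congrArg Prod.snd hz
      rw [hLsplit, hwν, hwθ] at h2
      simp only [h1, zero_smul, zero_add] at h2
      rw [Complex.real_smul, Complex.real_smul] at h2
      have h4 : P * ((cc : ℂ) * ((m qhat : ℝ) : ℂ) - (b : ℂ) * Complex.I) = 0 := by
        rw [← h2]; ring
      have h5 := (mul_eq_zero.mp h4).resolve_left hPne
      rw [Complex.ext_iff] at h5
      simp only [Complex.sub_re, Complex.sub_im, Complex.mul_re, Complex.mul_im,
        Complex.ofReal_re, Complex.ofReal_im, Complex.I_re, Complex.I_im,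
        Complex.zero_re, Complex.zero_im] at h5
      have hb : b = 0 := by
        have := h5.2
        simp at this
        linarith [this]
      have hc : cc = 0 := by
        have := h5.1
        simp at this
        rcases this with h | h
        · exact h
        · exact absurd h (ne_of_gt hmq)
      simp [h1, hb, hc]
    have hfr : Module.finrank ℝ (ℝ × ℝ × ℝ) = Module.finrank ℝ (ℝ × ℂ) := by
      simp [Module.finrank_prod, Complex.finrank_real_complex]
    have hTsurj : Function.Surjective T :=
      (LinearMap.injective_iff_surjective_of_finrank_eq_finrank
        (f := (T : (ℝ × ℝ × ℝ) →ₗ[ℝ] ℝ × ℂ)) hfr).mp hTinj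
    set e : (ℝ × ℝ × ℝ) ≃L[ℝ] ℝ × ℂ :=
      (LinearEquiv.ofBijective (T : (ℝ × ℝ × ℝ) →ₗ[ℝ] ℝ × ℂ)
        ⟨hTinj, hTsurj⟩).toContinuousLinearEquiv with hedef
    have hecoe : (e : (ℝ × ℝ × ℝ) →L[ℝ] ℝ × ℂ) = T := by
      apply ContinuousLinearMap.ext
      intro z
      rfl
    set G : ℝ × ℝ × ℝ → ℝ × ℂ := fun z => (z.1, Fdet z) with hGdef
    have hG : HasStrictFDerivAt G (e : (ℝ × ℝ × ℝ) →L[ℝ] ℝ × ℂ) P0 := by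
      rw [hecoe, hTdef]
      exact hasStrictFDerivAt_fst.prodMk hFstrict
    have hGP0 : G P0 = ((0:ℝ), (0:ℂ)) := by
      have hF0 : Fdet P0 = 0 := by
        show (logMat A m Ue 0 (m qhat) (Real.pi / 2)).det = 0
        rw [hdiagc, Matrix.det_diagonal]
        exact Finset.prod_eq_zero (Finset.mem_univ qhat) hcq
      rw [hGdef]
      show (P0.1, Fdet P0) = ((0:ℝ), (0:ℂ))
      rw [hF0, hP0def]
    set hfun := hG.localInverse G e P0 with hhdef
    have hinv0 : hfun ((0:ℝ), (0:ℂ)) = P0 := by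
      rw [← hGP0]
      exact hG.localInverse_apply_image
    have hri := hG.eventually_right_inverse
    rw [hGP0] at hri
    have htend : Filter.Tendsto (fun d : ℝ => (((d : ℝ), (0:ℂ)) : ℝ × ℂ)) (𝓝 0)
        (𝓝 (((0:ℝ), (0:ℂ)) : ℝ × ℂ)) := by
      have hcont : Continuous (fun d : ℝ => (((d : ℝ), (0:ℂ)) : ℝ × ℂ)) :=
        continuous_id.prodMk continuous_const
      simpa using hcont.tendsto 0
    have hev : ∀ᶠ d in 𝓝 (0:ℝ), G (hfun (d, 0)) = (d, 0) := htend.eventually hri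
    obtain ⟨ε, hε, hball⟩ := Metric.eventually_nhds_iff.mp hev
    have hder := hG.to_localInverse
    rw [hGP0] at hder
    have hpath : HasDerivAt (fun d : ℝ => (((d : ℝ), (0:ℂ)) : ℝ × ℂ)) ((1:ℝ), (0:ℂ)) 0 :=
      (hasDerivAt_id 0).prodMk (hasDerivAt_const _ _)
    have hh : HasDerivAt (fun d : ℝ => hfun (d, 0)) (e.symm ((1:ℝ), (0:ℂ))) 0 := by
      have := hder.hasFDerivAt.comp_hasDerivAt 0 hpath
      exact this
    set νf : ℝ → ℝ := fun d => (hfun (d, 0)).2.1 with hνfdef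
    set θf : ℝ → ℝ := fun d => (hfun (d, 0)).2.2 with hθfdef
    have hνd : HasDerivAt νf ((e.symm ((1:ℝ), (0:ℂ))).2.1) 0 := by
      have := ((ContinuousLinearMap.fst ℝ ℝ ℝ).comp
        (ContinuousLinearMap.snd ℝ ℝ (ℝ × ℝ))).hasFDerivAt.comp_hasDerivAt 0 hh
      exact this
    have hθd : HasDerivAt θf ((e.symm ((1:ℝ), (0:ℂ))).2.2) 0 := by
      have := ((ContinuousLinearMap.snd ℝ ℝ ℝ).comp
        (ContinuousLinearMap.snd ℝ ℝ (ℝ × ℝ))).hasFDerivAt.comp_hasDerivAt 0 hh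
      exact this
    refine ⟨min ε δ0, lt_min hε hδ00, min_le_right _ _, νf, θf,
      (e.symm ((1:ℝ), (0:ℂ))).2.1, (e.symm ((1:ℝ), (0:ℂ))).2.2,
      hνd.hasDerivWithinAt, hθd.hasDerivWithinAt, ?_, ?_, ?_⟩
    · rw [hνfdef]
      show (hfun ((0:ℝ), (0:ℂ))).2.1 = m qhat
      rw [hinv0, hP0def]
    · rw [hθfdef]
      show (hfun ((0:ℝ), (0:ℂ))).2.2 = Real.pi / 2
      rw [hinv0, hP0def]
    · intro d hd0 hdδ
      have hdist : dist d 0 < ε := by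
        rw [Real.dist_eq, sub_zero, abs_of_pos hd0]
        exact hdδ.trans_le (min_le_left _ _)
      have hb := hball hdist
      have h1 : (hfun (d, 0)).1 = d := by
        have := congrArg Prod.fst hb
        simpa [hGdef] using this
      have h2 : Fdet (hfun (d, 0)) = 0 := by
        have := congrArg Prod.snd hb
        simpa [hGdef] using this
      simp only [hFdef] at h2
      rw [h1] at h2
      simp only [hνfdef, hθfdef]
      simp only [logMat, hUe_pos d hd0.le] at h2
      simp only [logMat]
      exact h2
  · -- uniqueness of the derivatives
    intro δ ν θ ν' θ' hδpos hδle hν hθ hν0 hθ0 hdet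
    set M : ℝ → Matrix (Fin n) (Fin n) ℂ := fun d => logMat A m U d (ν d) (θ d) with hMdef
    set E : Matrix (Fin n) (Fin n) ℂ := Matrix.of fun j k =>
      if j = k then ((A j j : ℝ) : ℂ) + ((θ' * m j - V j : ℝ) : ℂ)
        + Complex.I * ((V j - ν' : ℝ) : ℂ)
      else ((A j k : ℝ) : ℂ) with hEdef
    have hM0 : M 0 = Matrix.diagonal c := by
      ext j k
      show logMat A m U 0 (ν 0) (θ 0) j k = Matrix.diagonal c j k
      rw [logMat_apply]
      by_cases h : j = k
      · subst h
        rw [if_pos rfl, hθ0, hν0, hU0, expI]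
        simp only [Matrix.diagonal_apply_eq, hcdef]
        push_cast
        ring
      · rw [if_neg h, Matrix.diagonal_apply_ne _ h]
        push_cast
        ring
    have hE : ∀ j k, HasDerivWithinAt (fun d => M d j k) (E j k) (Set.Ici 0) 0 := by
      intro j k
      have hfun : (fun d => M d j k) = fun d : ℝ => ((d : ℝ) : ℂ) * (A j k) +
          (if j = k then ((m j - U d j : ℝ) : ℂ)
            - Complex.exp (-Complex.I * ((θ d : ℝ) : ℂ)) * ((U d j : ℝ) : ℂ)
            - Complex.I * ((ν d : ℝ) : ℂ) else 0) := by
        funext d; exact logMat_apply A m U d (ν d) (θ d) j k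
      rw [hfun]
      have hbase : HasDerivWithinAt (fun d : ℝ => (d:ℂ) * (A j k)) ((A j k : ℂ))
          (Set.Ici 0) 0 := by
        simpa using
          (hasDerivWithinAt_ofReal (hasDerivWithinAt_id 0 (Set.Ici 0))).mul_const ((A j k : ℂ))
      by_cases h : j = k
      · subst h
        simp only [if_pos rfl]
        have h2 : HasDerivWithinAt (fun d => ((m j - U d j : ℝ) : ℂ)) (((-V j : ℝ)) : ℂ)
            (Set.Ici 0) 0 := hasDerivWithinAt_ofReal ((hVc j).const_sub (m j))
        have hexp := ((hasDerivWithinAt_ofReal hθ).const_mul (-Complex.I)).cexp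
        have hprod := hexp.mul (hasDerivWithinAt_ofReal (hVc j))
        have hν2 := (hasDerivWithinAt_ofReal hν).const_mul Complex.I
        have total := hbase.add ((h2.sub hprod).sub hν2)
        refine HasDerivWithinAt.congr_deriv total ?_
        rw [hθ0, hU0, expI]
        simp only [hEdef, Matrix.of_apply, eq_self_iff_true, if_true]
        push_cast
        ring_nf
        rw [Complex.I_sq]
        ring
      · simp only [if_neg h]
        have := hbase.add_const 0
        simpa [hEdef, Matrix.of_apply, if_neg h] using hbase.add_const 0
    have happly := det_hasDerivWithinAt qhat hE hM0 hcq
    have hzero : E qhat qhat * P = 0 := by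
      apply deriv_eq_zero_of_eventually_zero hδpos happly
      intro d hd0 hdδ
      rcases eq_or_lt_of_le hd0 with h | h
      · rw [← h, hM0, Matrix.det_diagonal]
        exact Finset.prod_eq_zero (Finset.mem_univ qhat) hcq
      · exact hdet d h hdδ
    have hEqq : E qhat qhat = 0 := by
      rcases mul_eq_zero.mp hzero with h | h
      · exact h
      · exact absurd h hPne
    simp only [hEdef, Matrix.of_apply, eq_self_iff_true, if_true] at hEqq
    rw [Complex.ext_iff] at hEqq
    simp only [Complex.add_re, Complex.add_im, Complex.ofReal_re, Complex.ofReal_im,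
      Complex.mul_re, Complex.mul_im, Complex.I_re, Complex.I_im, Complex.zero_re,
      Complex.zero_im] at hEqq
    obtain ⟨hre, him⟩ := hEqq
    have hre' : A qhat qhat + (θ' * m qhat - V qhat) = 0 := by linarith [hre]
    have him' : V qhat - ν' = 0 := by linarith [him]
    have hsplit : (∑ k ∈ Finset.univ.erase qhat, A qhat k * m k) + A qhat qhat * m qhat
        = ∑ k, A qhat k * m k := Finset.sum_erase_add _ _ (Finset.mem_univ qhat)
    have hmqne : m qhat ≠ 0 := ne_of_gt hmq
    have hνval : ν' = (1 / m qhat) * ∑ k, A qhat k * m k := by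
      have h1 : ν' = V qhat := by linarith
      rw [h1]
      field_simp
      linarith [hVval qhat]
    have hθval : θ' = (1 / (m qhat) ^ 2) * ∑ k ∈ Finset.univ.erase qhat, A qhat k * m k := by
      have h2 : θ' * m qhat ^ 2 = ∑ k ∈ Finset.univ.erase qhat, A qhat k * m k := by
        have h3 := hVval qhat
        nlinarith [hre', h3, hsplit]
      field_simp
      linarith [h2]
    refine ⟨hνval, hθval, by rw [hν0, hθ0, div_div], ?_⟩
    have hτ := hθ.div hν (by rw [hν0]; exact hmqne)
    refine HasDerivWithinAt.congr_deriv hτ ?_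
    rw [hν0, hθ0, hνval, hθval, ← hsplit]
    field_simp
    ring
end
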